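/- Let H₁ and H₂ be complex Hilbert spaces and let V, V' : H₁ → H₂ be isometries (V*∘V = 1 and V'*∘V' = 1). Define the bounded operator S on H₂ ⊕ H₂ by the block matrix S = [[1 − V∘V*, V∘V'*], [V'∘V*, 1 − V'∘V'*]]. Then S is a self-adjoint unitary (S* = S and S∘S = 1), and for every bounded operator T on H₁ one has S ∘ ((V∘T∘V*) ⊕ 0) ∘ S = 0 ⊕ (V'∘T∘V'*). -/

import Mathlib

/-!
`S` is self-adjoint block by block. Since `V* V = 1`, `P = V V*` is a projection with
`(1 - P) V = 0` and `V* (1 - P) = 0`, and likewise for `P' = V' V'*`; multiplying out the block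
matrices, every entry of `S S` and of `S ((V T V*) ⊕ 0) S` collapses to the claimed one by these
identities.
-/

noncomputable section
open ContinuousLinearMap

/-- The 2×2 block operator `[[A, B], [C, D]]` on the Hilbert-space direct sum `H ⊕ H`,
realized as `WithLp 2 (H × H)`. -/
def blockOp {H : Type} [NormedAddCommGroup H] [InnerProductSpace ℂ H]
    (A B C D : H →L[ℂ] H) : WithLp 2 (H × H) →L[ℂ] WithLp 2 (H × H) :=
  ((WithLp.prodContinuousLinearEquiv 2 ℂ H H).symm.toContinuousLinearMap.comp
    (((A.comp (ContinuousLinearMap.fst ℂ H H) + B.comp (ContinuousLinearMap.snd ℂ H H)).prod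
      (C.comp (ContinuousLinearMap.fst ℂ H H) +
        D.comp (ContinuousLinearMap.snd ℂ H H))))).comp
    (WithLp.prodContinuousLinearEquiv 2 ℂ H H).toContinuousLinearMap

section BlockOp

variable {H : Type} [NormedAddCommGroup H] [InnerProductSpace ℂ H]

lemma blockOp_apply (A B C D : H →L[ℂ] H) (x : WithLp 2 (H × H)) :
    blockOp A B C D x = WithLp.toLp 2 (A x.fst + B x.snd, C x.fst + D x.snd) := rfl

lemma blockOp_comp (A B C D A' B' C' D' : H →L[ℂ] H) :
    (blockOp A B C D).comp (blockOp A' B' C' D') =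
      blockOp (A.comp A' + B.comp C') (A.comp B' + B.comp D')
        (C.comp A' + D.comp C') (C.comp B' + D.comp D') := by
  ext x
  simp only [comp_apply, blockOp_apply, WithLp.toLp_fst, WithLp.toLp_snd, map_add, add_apply]
  congr 1
  ext <;> dsimp only <;> abel

lemma blockOp_id_zero_zero_id :
    blockOp (ContinuousLinearMap.id ℂ H) 0 0 (ContinuousLinearMap.id ℂ H) =
      ContinuousLinearMap.id ℂ (WithLp 2 (H × H)) := by
  ext x
  simp only [blockOp_apply, id_apply, zero_apply, add_zero, zero_add]
  rfl

lemma adjoint_blockOp [CompleteSpace H] (A B C D : H →L[ℂ] H) :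
    adjoint (blockOp A B C D) = blockOp (adjoint A) (adjoint C) (adjoint B) (adjoint D) := by
  refine ((eq_adjoint_iff _ _).mpr fun x y => ?_).symm
  simp only [blockOp_apply, WithLp.prod_inner_apply, WithLp.ofLp_fst, WithLp.ofLp_snd,
    inner_add_left, inner_add_right, adjoint_inner_left]
  ring

end BlockOp

section Rotation

variable {H₁ H₂ : Type} [NormedAddCommGroup H₁] [InnerProductSpace ℂ H₁] [CompleteSpace H₁]
  [NormedAddCommGroup H₂] [InnerProductSpace ℂ H₂] [CompleteSpace H₂]

lemma adjoint_apply_apply_of_adjoint_comp_self {V : H₁ →L[ℂ] H₂}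
    (hV : (adjoint V).comp V = ContinuousLinearMap.id ℂ H₁) (x : H₁) : adjoint V (V x) = x :=
  congrArg (· x) hV

def rotationOp (V V' : H₁ →L[ℂ] H₂) : WithLp 2 (H₂ × H₂) →L[ℂ] WithLp 2 (H₂ × H₂) :=
  blockOp (ContinuousLinearMap.id ℂ H₂ - V.comp (adjoint V)) (V.comp (adjoint V'))
    (V'.comp (adjoint V)) (ContinuousLinearMap.id ℂ H₂ - V'.comp (adjoint V'))

lemma adjoint_rotationOp (V V' : H₁ →L[ℂ] H₂) : adjoint (rotationOp V V') = rotationOp V V' := by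
  simp only [rotationOp, adjoint_blockOp, map_sub, adjoint_id, adjoint_comp, adjoint_adjoint]

lemma rotationOp_comp_self {V V' : H₁ →L[ℂ] H₂}
    (hV : (adjoint V).comp V = ContinuousLinearMap.id ℂ H₁)
    (hV' : (adjoint V').comp V' = ContinuousLinearMap.id ℂ H₁) :
    (rotationOp V V').comp (rotationOp V V') = ContinuousLinearMap.id ℂ (WithLp 2 (H₂ × H₂)) := by
  rw [rotationOp, blockOp_comp, ← blockOp_id_zero_zero_id]
  congr 1 <;> ext x <;>
    simp [adjoint_apply_apply_of_adjoint_comp_self hV,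
      adjoint_apply_apply_of_adjoint_comp_self hV']

lemma rotationOp_comp_blockOp_comp_rotationOp {V : H₁ →L[ℂ] H₂}
    (hV : (adjoint V).comp V = ContinuousLinearMap.id ℂ H₁) (V' : H₁ →L[ℂ] H₂) (T : H₁ →L[ℂ] H₁) :
    (rotationOp V V').comp ((blockOp (V.comp (T.comp (adjoint V))) 0 0 0).comp
      (rotationOp V V')) = blockOp 0 0 0 (V'.comp (T.comp (adjoint V'))) := by
  rw [rotationOp, blockOp_comp, blockOp_comp]
  congr 1 <;> ext x <;>
    simp [adjoint_apply_apply_of_adjoint_comp_self hV]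

end Rotation

/-- Given isometries `V, V' : H₁ → H₂`, the block operator
`S = [[1 − V V*, V V'*], [V' V*, 1 − V' V'*]]` is a self-adjoint unitary conjugating
`(V T V*) ⊕ 0` to `0 ⊕ (V' T V'*)` for every bounded operator `T` on `H₁`. -/
theorem isometry_conjugation_rotation
    {H₁ H₂ : Type} [NormedAddCommGroup H₁] [InnerProductSpace ℂ H₁] [CompleteSpace H₁]
    [NormedAddCommGroup H₂] [InnerProductSpace ℂ H₂] [CompleteSpace H₂]
    (V V' : H₁ →L[ℂ] H₂)
    (hV : (ContinuousLinearMap.adjoint V).comp V = ContinuousLinearMap.id ℂ H₁)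
    (hV' : (ContinuousLinearMap.adjoint V').comp V' = ContinuousLinearMap.id ℂ H₁) :
    let S := blockOp (ContinuousLinearMap.id ℂ H₂ - V.comp (ContinuousLinearMap.adjoint V))
      (V.comp (ContinuousLinearMap.adjoint V'))
      (V'.comp (ContinuousLinearMap.adjoint V))
      (ContinuousLinearMap.id ℂ H₂ - V'.comp (ContinuousLinearMap.adjoint V'))
    ContinuousLinearMap.adjoint S = S ∧
    S.comp S = ContinuousLinearMap.id ℂ (WithLp 2 (H₂ × H₂)) ∧
    ∀ T : H₁ →L[ℂ] H₁,
      S.comp ((blockOp (V.comp (T.comp (ContinuousLinearMap.adjoint V))) 0 0 0).comp S) =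
        blockOp 0 0 0 (V'.comp (T.comp (ContinuousLinearMap.adjoint V'))) :=
  ⟨adjoint_rotationOp V V', rotationOp_comp_self hV hV',
    rotationOp_comp_blockOp_comp_rotationOp hV V'⟩
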